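/- The ironed virtual value is bounded by the value: for all x in the finite support V_j, the ironed virtual value satisfies φ̃_j(x) ≤ x. -/

import Mathlib

open scoped Classical
open Finset

/-- The `f`-weighted average of `φ` over the values of `V` in the interval `[y, x]`. -/
noncomputable def ironAvg (V : Finset ℝ) (f φ : ℝ → ℝ) (y x : ℝ) : ℝ :=
  (∑ y' ∈ V.filter (fun y' => y ≤ y' ∧ y' ≤ x), f y' * φ y') /
    (∑ y' ∈ V.filter (fun y' => y ≤ y' ∧ y' ≤ x), f y')

/-- The largest `y ∈ V`, `y ≤ x`, maximizing the weighted average `ironAvg V f φ y x`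
(ties broken toward larger values). -/
noncomputable def ironYstar (V : Finset ℝ) (f φ : ℝ → ℝ) (x : ℝ) : ℝ :=
  ((V.filter (fun y => y ≤ x ∧
      ∀ y' ∈ V, y' ≤ x → ironAvg V f φ y' x ≤ ironAvg V f φ y x)).max).unbotD 0

/-- The ironing procedure: starting from the top `x = max V`, find the maximizer
`y* = ironYstar V f φ x`, assign the weighted average `ironAvg V f φ y* x` on
`[y*, x] ∩ V`, and recurse below `y*`.  The fuel `V.card` suffices for termination. -/
noncomputable def ironLoop (V : Finset ℝ) (f φ : ℝ → ℝ) : ℕ → ℝ → ℝ → ℝ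
  | 0, _, _ => 0
  | fuel + 1, x, z =>
      if ironYstar V f φ x ≤ z then ironAvg V f φ (ironYstar V f φ x) x
      else ironLoop V f φ fuel
        (((V.filter (fun y => y < ironYstar V f φ x)).max).unbotD 0) z

/-- Myerson's (discrete) virtual value: `φ(x) = x` if `x = max V`, and otherwise
`φ(x) = x − (succ(x) − x)·(1 − F(x))/f(x)` where `succ(x)` is the smallest element of
`V` above `x` and `1 − F(x) = Pr_{y ∼ f}(y > x)`. -/
noncomputable def virtVal (V : Finset ℝ) (f : ℝ → ℝ) (x : ℝ) : ℝ :=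
  if h : (V.filter (fun y => x < y)).Nonempty then
    x - ((V.filter (fun y => x < y)).min' h - x) *
        (∑ y ∈ V.filter (fun y => x < y), f y) / f x
  else x

/-- The ironed virtual value `φ̃`, produced by running the ironing procedure on
Myerson's virtual value starting from the top `max V`. -/
noncomputable def ironedVirtVal (V : Finset ℝ) (f : ℝ → ℝ) (z : ℝ) : ℝ :=
  ironLoop V f (virtVal V f) V.card ((V.max).unbotD 0) z

/-! Myerson's virtual value satisfies `φ(x) ≤ x`, and ironing preserves this bound. Let `z` lie in
an ironing block `[y*, x]`. The part of the block above `z` is itself of the form `[m, x]` with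
`m ∈ V`, so by the choice of `y*` it averages at most the whole block; hence the whole block
averages at most its lower part `[y*, z]`, on which `φ ≤ z`. -/

lemma Finset.max_unbotD_eq_max' {α : Type*} [LinearOrder α] {s : Finset α} (hs : s.Nonempty)
    (d : α) : s.max.unbotD d = s.max' hs := by
  rw [← coe_max' hs, WithBot.unbotD_coe]

lemma Finset.card_filter_lt_lt_card_filter_le {α : Type*} [LinearOrder α] {s : Finset α}
    {y x : α} (hy : y ∈ s) (hyx : y ≤ x) : #(s.filter (· < y)) < #(s.filter (· ≤ x)) := by
  refine card_lt_card ((ssubset_iff_of_subset fun t ht => ?_).2 ⟨y, ?_, ?_⟩)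
  · simp only [mem_filter] at ht ⊢
    exact ⟨ht.1, ht.2.le.trans hyx⟩
  · exact mem_filter.2 ⟨hy, hyx⟩
  · simp

lemma mediant_le_of_le_mul {sB wB sT wT z : ℝ} (hwB : 0 < wB) (hwT : 0 ≤ wT)
    (hB : sB ≤ z * wB) (hT : sT ≤ (sB + sT) / (wB + wT) * wT) :
    (sB + sT) / (wB + wT) ≤ z := by
  set A := (sB + sT) / (wB + wT)
  have hA : A * (wB + wT) = sB + sT := div_mul_cancel₀ _ (by positivity)
  exact le_of_mul_le_mul_right (by linarith) hwB

lemma virtVal_le_self {V : Finset ℝ} {f : ℝ → ℝ} (hf : ∀ t ∈ V, 0 < f t) {x : ℝ}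
    (hx : x ∈ V) : virtVal V f x ≤ x := by
  unfold virtVal
  split_ifs with h
  · have hgap : 0 ≤ (V.filter (x < ·)).min' h - x :=
      sub_nonneg.2 (mem_filter.1 (min'_mem _ h)).2.le
    have htail : 0 ≤ ∑ t ∈ V.filter (x < ·), f t :=
      sum_nonneg fun t ht => (hf t (mem_filter.1 ht).1).le
    have := div_nonneg (mul_nonneg hgap htail) (hf x hx).le
    linarith
  · exact le_rfl

lemma sum_filter_Icc_eq_add (V : Finset ℝ) (g : ℝ → ℝ) {y z x : ℝ} (hyz : y ≤ z)
    (hzx : z ≤ x) :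
    ∑ t ∈ V.filter (fun t => y ≤ t ∧ t ≤ x), g t =
      ∑ t ∈ V.filter (fun t => y ≤ t ∧ t ≤ z), g t +
        ∑ t ∈ V.filter (fun t => z < t ∧ t ≤ x), g t := by
  rw [← sum_filter_add_sum_filter_not _ (· ≤ z), filter_filter, filter_filter]
  congr 2 <;> ext t <;> simp only [mem_filter, not_le] <;> constructor
  · rintro ⟨htV, ⟨hyt, -⟩, htz⟩
    exact ⟨htV, hyt, htz⟩
  · rintro ⟨htV, hyt, htz⟩
    exact ⟨htV, ⟨hyt, htz.trans hzx⟩, htz⟩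
  · rintro ⟨htV, ⟨-, htx⟩, hzt⟩
    exact ⟨htV, hzt, htx⟩
  · rintro ⟨htV, hzt, htx⟩
    exact ⟨htV, ⟨hyz.trans hzt.le, htx⟩, hzt⟩

section Ironing

variable {V : Finset ℝ} {f φ : ℝ → ℝ}

lemma ironYstar_spec {x z : ℝ} (hz : z ∈ V) (hzx : z ≤ x) :
    ironYstar V f φ x ∈ V ∧ ironYstar V f φ x ≤ x ∧
      ∀ y ∈ V, y ≤ x → ironAvg V f φ y x ≤ ironAvg V f φ (ironYstar V f φ x) x := by
  obtain ⟨b, hb, hbmax⟩ := (V.filter (· ≤ x)).exists_max_image (ironAvg V f φ · x)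
    ⟨z, mem_filter.2 ⟨hz, hzx⟩⟩
  rw [mem_filter] at hb
  have hne : (V.filter fun y => y ≤ x ∧
      ∀ y' ∈ V, y' ≤ x → ironAvg V f φ y' x ≤ ironAvg V f φ y x).Nonempty :=
    ⟨b, mem_filter.2 ⟨hb.1, hb.2, fun y' hy' hy'x => hbmax y' (mem_filter.2 ⟨hy', hy'x⟩)⟩⟩
  rw [ironYstar, max_unbotD_eq_max' hne]
  simpa only [mem_filter] using max'_mem _ hne

lemma sum_tail_le_ironAvg_mul (hf : ∀ t ∈ V, 0 < f t) {y z x : ℝ}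
    (hmax : ∀ y' ∈ V, y' ≤ x → ironAvg V f φ y' x ≤ ironAvg V f φ y x) :
    ∑ t ∈ V.filter (fun t => z < t ∧ t ≤ x), f t * φ t ≤
      ironAvg V f φ y x * ∑ t ∈ V.filter (fun t => z < t ∧ t ≤ x), f t := by
  set T := V.filter (fun t => z < t ∧ t ≤ x)
  rcases T.eq_empty_or_nonempty with hT | hT
  · simp [hT]
  obtain ⟨hmV, hzm, hmx⟩ : T.min' hT ∈ V ∧ z < T.min' hT ∧ T.min' hT ≤ x := by
    simpa only [T, mem_filter] using min'_mem T hT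
  have hTm : V.filter (fun t => T.min' hT ≤ t ∧ t ≤ x) = T := by
    ext t
    simp only [T, mem_filter]
    constructor
    · rintro ⟨htV, hmt, htx⟩
      exact ⟨htV, hzm.trans_le hmt, htx⟩
    · rintro ⟨htV, hzt, htx⟩
      exact ⟨htV, min'_le _ _ (mem_filter.2 ⟨htV, hzt, htx⟩), htx⟩
  have := hmax _ hmV hmx
  rwa [ironAvg, hTm, div_le_iff₀ (sum_pos (fun t ht => hf t (mem_filter.1 ht).1) hT)] at this

lemma ironAvg_le_of_mem_block (hf : ∀ t ∈ V, 0 < f t) (hφ : ∀ t ∈ V, φ t ≤ t) {y z x : ℝ}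
    (hz : z ∈ V) (hyz : y ≤ z) (hzx : z ≤ x)
    (hmax : ∀ y' ∈ V, y' ≤ x → ironAvg V f φ y' x ≤ ironAvg V f φ y x) :
    ironAvg V f φ y x ≤ z := by
  have htail := sum_tail_le_ironAvg_mul hf (z := z) hmax
  rw [ironAvg, sum_filter_Icc_eq_add V (fun t => f t * φ t) hyz hzx,
    sum_filter_Icc_eq_add V f hyz hzx] at htail ⊢
  refine mediant_le_of_le_mul (sum_pos (fun t ht => hf t (mem_filter.1 ht).1) ⟨z, ?_⟩)
    (sum_nonneg fun t ht => (hf t (mem_filter.1 ht).1).le) ?_ htail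
  · exact mem_filter.2 ⟨hz, hyz, le_rfl⟩
  · rw [mul_sum]
    refine sum_le_sum fun t ht => ?_
    obtain ⟨htV, -, htz⟩ := mem_filter.1 ht
    rw [mul_comm z]
    exact mul_le_mul_of_nonneg_left ((hφ t htV).trans htz) (hf t htV).le

lemma ironLoop_le_self (hf : ∀ t ∈ V, 0 < f t) (hφ : ∀ t ∈ V, φ t ≤ t) {fuel : ℕ}
    {x z : ℝ} (hz : z ∈ V) (hzx : z ≤ x) (hfuel : #(V.filter (· ≤ x)) ≤ fuel) :
    ironLoop V f φ fuel x z ≤ z := by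
  induction fuel generalizing x with
  | zero =>
    have : 0 < #(V.filter (· ≤ x)) := card_pos.2 ⟨z, mem_filter.2 ⟨hz, hzx⟩⟩
    omega
  | succ n ih =>
    obtain ⟨hyV, hyx, hymax⟩ := ironYstar_spec (f := f) (φ := φ) hz hzx
    rw [ironLoop]
    split_ifs with hyz
    · exact ironAvg_le_of_mem_block hf hφ hz hyz hzx hymax
    set y := ironYstar V f φ x
    have hzy : z ∈ V.filter (· < y) := mem_filter.2 ⟨hz, not_le.1 hyz⟩
    rw [max_unbotD_eq_max' ⟨z, hzy⟩]
    set x' := (V.filter (· < y)).max' ⟨z, hzy⟩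
    have hx'y : x' < y := (mem_filter.1 (max'_mem (V.filter (· < y)) ⟨z, hzy⟩)).2
    refine ih (le_max' _ z hzy) (Nat.lt_succ_iff.1 ?_)
    calc #(V.filter (· ≤ x'))
        ≤ #(V.filter (· < y)) := card_le_card fun t ht => by
          obtain ⟨htV, htx'⟩ := mem_filter.1 ht
          exact mem_filter.2 ⟨htV, htx'.trans_lt hx'y⟩
      _ < #(V.filter (· ≤ x)) := card_filter_lt_lt_card_filter_le hyV hyx
      _ ≤ n + 1 := hfuel

end Ironing

theorem ironedVirtVal_le_value_general (V : Finset ℝ)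
    (f : ℝ → ℝ) (hf : ∀ x ∈ V, 0 < f x) :
    ∀ x ∈ V, ironedVirtVal V f x ≤ x := by
  intro x hx
  rw [ironedVirtVal, max_unbotD_eq_max' ⟨x, hx⟩]
  exact ironLoop_le_self hf (fun _ => virtVal_le_self hf) hx (le_max' V x hx)
    (card_le_card (filter_subset _ V))

/-- The ironed virtual value is bounded by the value: for all `x` in
the finite support `V` of the distribution `f`, `φ̃(x) ≤ x`. -/
theorem ironedVirtVal_le_value (V : Finset ℝ) (hV : V.Nonempty) (hVpos : ∀ x ∈ V, 0 ≤ x)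
    (f : ℝ → ℝ) (hf : ∀ x ∈ V, 0 < f x) (hsum : ∑ x ∈ V, f x = 1) :
    ∀ x ∈ V, ironedVirtVal V f x ≤ x :=
  ironedVirtVal_le_value_general V f hf
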